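/- Let μ be the uniform distribution on (0, 1/2] (the conditional law of U given W=1 when p ≡ 1/2), and let ω(u) = 1 on (0,1/4], = 1/2 on (1/4, 3/4], = 0 on (3/4, 1]. Let Q be the quantile function of a probability measure ρ on [y_min, y_max]. Then the countermonotonic OT value plus the trivial tail contribution equals ∫₀^{1/2} Q(2u) ω(u) du + ∫_{1/2}^1 y_min ω(u) du = (1/4)·𝔼_ρ[Y] + (1/8)·(2∫₀^{1/2} Q(s) ds) + (1/8)·y_min, i.e., (1/4) 𝔼_ρ[Y] + (1/8) CVaR_{0.5}(ρ) + (1/8) y_min, where CVaR_α(ρ) = (1/α) ∫₀^α Q(s) ds. -/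

import Mathlib

/-!
By the quantile transform, `𝔼_ρ[Y] = ∫₀¹ Q`. Substituting `s = 2u` turns the first integral into
`½ ∫₀¹ Q(s) ω(s/2) ds`, and `ω(s/2)` is `1` on `(0, 1/2]` and `1/2` on `(1/2, 1]`, so it equals
`½ ∫₀^{1/2} Q + ¼ ∫_{1/2}^1 Q = ¼ ∫₀¹ Q + ¼ ∫₀^{1/2} Q`. On the tail `ω` is `1/2` on `(1/2, 3/4]`
and `0` beyond, giving `y_min / 8`.
-/

open MeasureTheory Set

/-- Quantile function of a measure on ℝ: `Q_μ(t) = inf {x : μ((-∞,x]) ≥ t}`. -/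
noncomputable def quantile (μ : Measure ℝ) (t : ℝ) : ℝ :=
  sInf {x : ℝ | t ≤ (μ (Iic x)).toReal}

open Filter ProbabilityTheory
open scoped Interval

section Quantile

variable {ρ : Measure ℝ}

lemma bddBelow_setOf_le_cdf {t : ℝ} (ht : 0 < t) : BddBelow {x : ℝ | t ≤ cdf ρ x} := by
  obtain ⟨a, ha⟩ := eventually_atBot.1 ((tendsto_order.1 (tendsto_cdf_atBot (μ := ρ))).2 t ht)
  refine ⟨a, fun x hx => le_of_not_gt fun hxa => ?_⟩
  exact (ha x hxa.le).not_ge hx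

lemma nonempty_setOf_le_cdf {t : ℝ} (ht : t < 1) : {x : ℝ | t ≤ cdf ρ x}.Nonempty :=
  (((tendsto_order.1 (tendsto_cdf_atTop (μ := ρ))).1 t ht).exists).imp fun _ => le_of_lt

variable [IsProbabilityMeasure ρ]

lemma quantile_eq_sInf_cdf (t : ℝ) : quantile ρ t = sInf {x : ℝ | t ≤ cdf ρ x} := by
  simp only [quantile, cdf_eq_real, measureReal_def]

/-- The infimum defining the quantile is attained because the cdf is right-continuous. -/
lemma quantile_le_iff_le_cdf {t : ℝ} (ht : t ∈ Ioo 0 1) (x : ℝ) :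
    quantile ρ t ≤ x ↔ t ≤ cdf ρ x := by
  have hbdd := bddBelow_setOf_le_cdf (ρ := ρ) ht.1
  have hne := nonempty_setOf_le_cdf (ρ := ρ) ht.2
  rw [quantile_eq_sInf_cdf]
  refine ⟨fun hle => ?_, fun hx => csInf_le hbdd hx⟩
  set a := sInf {x : ℝ | t ≤ cdf ρ x}
  have hmem : t ≤ cdf ρ a := by
    refine ge_of_tendsto ((cdf ρ).right_continuous a |>.mono_left
      (nhdsWithin_mono _ Ioi_subset_Ici_self)) ?_
    filter_upwards [self_mem_nhdsWithin] with y hy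
    obtain ⟨z, hz, hzy⟩ := (csInf_lt_iff hbdd hne).1 hy
    exact hz.trans (monotone_cdf ρ hzy.le)
  exact hmem.trans (monotone_cdf ρ hle)

lemma quantile_monotoneOn : MonotoneOn (quantile ρ) (Ioo 0 1) := fun _ hs _ ht hst =>
  (quantile_le_iff_le_cdf hs _).2 <| hst.trans <| (quantile_le_iff_le_cdf ht _).1 le_rfl

lemma aemeasurable_quantile : AEMeasurable (quantile ρ) (volume.restrict (Ioo 0 1)) :=
  aemeasurable_restrict_of_monotoneOn measurableSet_Ioo quantile_monotoneOn

lemma map_quantile_volume_restrict_Ioo : (volume.restrict (Ioo 0 1)).map (quantile ρ) = ρ := by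
  have : IsProbabilityMeasure (volume.restrict (Ioo (0 : ℝ) 1)) := ⟨by simp⟩
  have : IsProbabilityMeasure ((volume.restrict (Ioo (0 : ℝ) 1)).map (quantile ρ)) :=
    Measure.isProbabilityMeasure_map aemeasurable_quantile
  refine Measure.ext_of_Iic _ _ fun x => ?_
  have hpre : quantile ρ ⁻¹' Iic x ∩ Ioo 0 1 = Ioo 0 1 ∩ Iic (cdf ρ x) := by
    ext t
    simp only [mem_inter_iff, mem_preimage, mem_Iic]
    exact ⟨fun ⟨hq, ht⟩ => ⟨ht, (quantile_le_iff_le_cdf ht x).1 hq⟩,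
      fun ⟨ht, hx⟩ => ⟨(quantile_le_iff_le_cdf ht x).2 hx, ht⟩⟩
  rw [Measure.map_apply_of_aemeasurable aemeasurable_quantile measurableSet_Iic,
    Measure.restrict_apply' measurableSet_Ioo, hpre,
    measure_congr (Ioo_ae_eq_Ioc.inter (ae_eq_refl (Iic (cdf ρ x)))), Ioc_inter_Iic,
    min_eq_right (cdf_le_one ρ x), Real.volume_Ioc, sub_zero, ofReal_cdf]

lemma integral_id_eq_intervalIntegral_quantile :
    ∫ x, x ∂ρ = ∫ t in (0 : ℝ)..1, quantile ρ t := by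
  rw [intervalIntegral.integral_of_le zero_le_one, integral_Ioc_eq_integral_Ioo]
  conv_lhs => rw [← map_quantile_volume_restrict_Ioo (ρ := ρ)]
  exact integral_map aemeasurable_quantile aestronglyMeasurable_id

lemma intervalIntegrable_quantile (h : Integrable id ρ) :
    IntervalIntegrable (quantile ρ) volume 0 1 := by
  rw [intervalIntegrable_iff_integrableOn_Ioc_of_le zero_le_one, IntegrableOn,
    ← Measure.restrict_congr_set Ioo_ae_eq_Ioc]
  rw [← map_quantile_volume_restrict_Ioo (ρ := ρ)] at h
  exact (integrable_map_measure aestronglyMeasurable_id aemeasurable_quantile).1 h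

end Quantile

section PiecewiseConstantFactor

variable {a b c : ℝ} {f g : ℝ → ℝ}

lemma intervalIntegral_mul_of_eqOn_uIoc (hg : EqOn g (fun _ => c) (Ι a b)) :
    ∫ u in a..b, f u * g u = c * ∫ u in a..b, f u := by
  rw [← intervalIntegral.integral_const_mul]
  exact intervalIntegral.integral_congr_ae (.of_forall fun u hu => by rw [hg hu, mul_comm])

lemma IntervalIntegrable.mul_of_eqOn_uIoc (hf : IntervalIntegrable f volume a b)
    (hg : EqOn g (fun _ => c) (Ι a b)) : IntervalIntegrable (fun u => f u * g u) volume a b :=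
  (hf.const_mul c).congr_ae <| (ae_restrict_iff' measurableSet_uIoc).2 <|
    .of_forall fun u hu => by simp only [hg hu, mul_comm]

end PiecewiseConstantFactor

noncomputable def stepWeight (u : ℝ) : ℝ :=
  if u ≤ 1/4 then 1 else if u ≤ 3/4 then 1/2 else 0

lemma integral_comp_two_mul_mul_stepWeight {f : ℝ → ℝ} (hf : IntervalIntegrable f volume 0 1) :
    ∫ u in (0:ℝ)..(1/2), f (2 * u) * stepWeight u
      = 1/2 * ((∫ s in (0:ℝ)..(1/2), f s) + 1/2 * ∫ s in (1/2:ℝ)..1, f s) := by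
  have hlo : EqOn (fun s => stepWeight (s / 2)) (fun _ => 1) (Ι 0 (1/2)) := by
    intro s hs
    rw [uIoc_of_le (by norm_num)] at hs
    simp only [stepWeight, if_pos (by linarith [hs.2] : s / 2 ≤ 1/4)]
  have hhi : EqOn (fun s => stepWeight (s / 2)) (fun _ => 1/2) (Ι (1/2) 1) := by
    intro s hs
    rw [uIoc_of_le (by norm_num)] at hs
    simp only [stepWeight, if_neg (by linarith [hs.1] : ¬ s / 2 ≤ 1/4),
      if_pos (by linarith [hs.2] : s / 2 ≤ 3/4)]
  have hf₁ := hf.mono_set (uIcc_subset_uIcc_left (by norm_num [mem_uIcc] : (1/2 : ℝ) ∈ [[0, 1]]))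
  have hf₂ := hf.mono_set (uIcc_subset_uIcc_right (by norm_num [mem_uIcc] : (1/2 : ℝ) ∈ [[0, 1]]))
  have hsub := intervalIntegral.integral_comp_mul_left (fun s => f s * stepWeight (s / 2))
    (a := 0) (b := 1/2) two_ne_zero
  norm_num at hsub
  rw [hsub, ← intervalIntegral.integral_add_adjacent_intervals (hf₁.mul_of_eqOn_uIoc hlo)
    (hf₂.mul_of_eqOn_uIoc hhi), intervalIntegral_mul_of_eqOn_uIoc hlo,
    intervalIntegral_mul_of_eqOn_uIoc hhi, one_mul]

lemma integral_const_mul_stepWeight (y : ℝ) :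
    ∫ u in (1/2:ℝ)..1, y * stepWeight u = 1/8 * y := by
  have hmid : EqOn stepWeight (fun _ => 1/2) (Ι (1/2) (3/4)) := by
    intro u hu
    rw [uIoc_of_le (by norm_num)] at hu
    simp only [stepWeight, if_neg (by linarith [hu.1] : ¬ u ≤ 1/4), if_pos hu.2]
  have htop : EqOn stepWeight (fun _ => 0) (Ι (3/4) 1) := by
    intro u hu
    rw [uIoc_of_le (by norm_num)] at hu
    simp only [stepWeight, if_neg (by linarith [hu.1] : ¬ u ≤ 1/4), if_neg hu.1.not_ge]
  rw [← intervalIntegral.integral_add_adjacent_intervals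
    (intervalIntegrable_const.mul_of_eqOn_uIoc hmid)
    (intervalIntegrable_const.mul_of_eqOn_uIoc htop),
    intervalIntegral_mul_of_eqOn_uIoc hmid, intervalIntegral_mul_of_eqOn_uIoc htop,
    intervalIntegral.integral_const]
  norm_num
  ring

theorem stmt16_general (ymin ymax : ℝ)
    (ρ : Measure ℝ) [IsProbabilityMeasure ρ] (hsupp : ρ (Icc ymin ymax)ᶜ = 0)
    (ω : ℝ → ℝ)
    (hω : ω = fun u => if u ≤ (1/4 : ℝ) then 1 else if u ≤ (3/4 : ℝ) then 1/2 else 0) :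
    (∫ u in (0:ℝ)..(1/2 : ℝ), quantile ρ (2 * u) * ω u)
        + (∫ u in (1/2:ℝ)..(1:ℝ), ymin * ω u)
      = (1/4) * (∫ x, x ∂ρ)
        + (1/8) * (2 * ∫ s in (0:ℝ)..(1/2 : ℝ), quantile ρ s)
        + (1/8) * ymin := by
  obtain rfl : ω = stepWeight := hω
  have hQ : IntervalIntegrable (quantile ρ) volume 0 1 := intervalIntegrable_quantile <|
    Integrable.of_mem_Icc ymin ymax aemeasurable_id (mem_ae_iff.2 hsupp)
  have hQ₁ := hQ.mono_set (uIcc_subset_uIcc_left (by norm_num [mem_uIcc] : (1/2 : ℝ) ∈ [[0, 1]]))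
  rw [integral_comp_two_mul_mul_stepWeight hQ, integral_const_mul_stepWeight,
    integral_id_eq_intervalIntegral_quantile, ← intervalIntegral.integral_interval_sub_left hQ hQ₁]
  ring

/-- Explicit evaluation of the sharp lower bound in the binary-instrument example
with constant propensity `1/2`: with the step weight `ω = 1` on `(0,1/4]`,
`= 1/2` on `(1/4,3/4]`, `= 0` on `(3/4,1]`, the countermonotonic OT value on the
identified interval `(0,1/2]` plus the trivial tail contribution equals
`(1/4)𝔼_ρ[Y] + (1/8)·CVaR_{0.5}(ρ) + (1/8)·y_min`, where
`CVaR_α(ρ) = (1/α)∫₀^α Q(s) ds` (here `CVaR_{0.5} = 2∫₀^{1/2} Q`). -/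
theorem stmt16 (ymin ymax : ℝ) (hy : ymin ≤ ymax)
    (ρ : Measure ℝ) [IsProbabilityMeasure ρ] (hsupp : ρ (Icc ymin ymax)ᶜ = 0)
    (ω : ℝ → ℝ)
    (hω : ω = fun u => if u ≤ (1/4 : ℝ) then 1 else if u ≤ (3/4 : ℝ) then 1/2 else 0) :
    (∫ u in (0:ℝ)..(1/2 : ℝ), quantile ρ (2 * u) * ω u)
        + (∫ u in (1/2:ℝ)..(1:ℝ), ymin * ω u)
      = (1/4) * (∫ x, x ∂ρ)
        + (1/8) * (2 * ∫ s in (0:ℝ)..(1/2 : ℝ), quantile ρ s)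
        + (1/8) * ymin :=
  stmt16_general ymin ymax ρ hsupp ω hω
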